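/- arXiv:2509.21612 — 3 statements merged into one kernel-verified Lean document; each statement's English description precedes it below -/
import Mathlib

section
/- Let n, m be natural numbers, p ∈ [0,1] with n·p ≤ 1, and let μ be a probability measure on a measurable space X that assigns mass μ({x_i}) = p to each of n distinct points x₁, …, x_n. Then the probability, under the m-fold product measure μ^{⊗m} on X^m, that every one of the n designated points appears among the m coordinates equals Σ_{i=0}^{n} (−1)^i · C(n, i) · (1 − i·p)^m, where C(n,i) is the binomial coefficient. -/
/-!
By inclusion–exclusion over the events "`x i` is never drawn", the probability that no point is
missed is the alternating sum over `u ⊆ {0, …, n-1}` of the probability that every `x i` with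
`i ∈ u` is missed, i.e. that all `m` coordinates avoid the set `x '' u`. That set has mass
`#u * p`, so by independence of the coordinates this probability is `(1 - #u * p) ^ m`; grouping
the subsets `u` by cardinality gives the binomial coefficients.
-/

open MeasureTheory Finset

namespace MeasureTheory

variable {Ω : Type*} [MeasurableSpace Ω]

theorem measureReal_biInter_compl_eq_sum_powerset {ι : Type*} (μ : Measure Ω) [IsFiniteMeasure μ]
    (t : Finset ι) {s : ι → Set Ω} (hs : ∀ i ∈ t, MeasurableSet (s i)) :
    μ.real (⋂ i ∈ t, (s i)ᶜ) = ∑ u ∈ t.powerset, (-1 : ℝ) ^ #u * μ.real (⋂ i ∈ u, s i) := by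
  classical
  have hempty : t.powerset.filter (¬ ·.Nonempty) = {∅} := by
    ext u; simp +contextual [Finset.not_nonempty_iff_eq_empty]
  rw [← Set.compl_iUnion₂, measureReal_compl (t.measurableSet_biUnion hs),
    measureReal_biUnion_eq_sum_powerset hs, ← sum_filter_add_sum_filter_not t.powerset (·.Nonempty),
    hempty]
  simp [pow_succ, sub_eq_add_neg, ← sum_neg_distrib, add_comm]

theorem measureReal_pi_univ_pi_compl_const {ι : Type*} [Fintype ι] (μ : Measure Ω)
    [IsProbabilityMeasure μ] {s : Set Ω} (hs : MeasurableSet s) :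
    (Measure.pi fun _ : ι => μ).real (Set.univ.pi fun _ => sᶜ)
      = (1 - μ.real s) ^ Fintype.card ι := by
  rw [measureReal_def, Measure.pi_pi, ENNReal.toReal_prod]
  simp [← measureReal_def, measureReal_compl hs]

theorem measureReal_image_finset_eq_card_mul [MeasurableSingletonClass Ω] {ι : Type*}
    (μ : Measure Ω) [IsFiniteMeasure μ] {x : ι → Ω} (hx : Function.Injective x) {p : ℝ}
    (hμ : ∀ i, μ.real {x i} = p) (u : Finset ι) :
    μ.real (x '' u) = #u * p := by
  classical
  rw [← coe_image, ← sum_measureReal_singleton, sum_image hx.injOn]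
  simp [hμ]

end MeasureTheory

theorem coverage_inclusion_exclusion_general
    {X : Type*} [MeasurableSpace X] [MeasurableSingletonClass X]
    (n m : ℕ) (p : ℝ) (hp0 : 0 ≤ p)
    (μ : Measure X) [IsProbabilityMeasure μ]
    (x : Fin n → X) (hx : Function.Injective x)
    (hμ : ∀ i, μ {x i} = ENNReal.ofReal p) :
    (Measure.pi (fun _ : Fin m => μ)
        {f : Fin m → X | ∀ i : Fin n, ∃ j : Fin m, f j = x i}).toReal
      = ∑ i ∈ Finset.range (n + 1),
          (-1 : ℝ) ^ i * (n.choose i) * (1 - (i : ℝ) * p) ^ m := by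
  classical
  have hcover : {f : Fin m → X | ∀ i, ∃ j, f j = x i}
      = ⋂ i ∈ univ, (Set.univ.pi fun _ : Fin m => {x i}ᶜ)ᶜ := by
    ext f; simp
  have hpoint (i : Fin n) : μ.real {x i} = p := by simp [measureReal_def, hμ, hp0]
  have hmiss (u : Finset (Fin n)) :
      (Measure.pi fun _ : Fin m => μ).real (⋂ i ∈ u, Set.univ.pi fun _ => {x i}ᶜ)
        = (1 - #u * p) ^ m := by
    have hmiss_set : ⋂ i ∈ u, Set.univ.pi (fun _ : Fin m => {x i}ᶜ)
        = Set.univ.pi fun _ => (x '' u)ᶜ := by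
      ext f
      simp only [Set.mem_iInter, Set.mem_univ_pi, Set.mem_compl_iff, Set.mem_singleton_iff,
        Set.mem_image, mem_coe, not_exists, not_and]
      grind
    rw [hmiss_set, measureReal_pi_univ_pi_compl_const μ ((finite_toSet u).image x).measurableSet,
      measureReal_image_finset_eq_card_mul μ hx hpoint, Fintype.card_fin]
  rw [← Measure.real_def, hcover, measureReal_biInter_compl_eq_sum_powerset _ _
    fun i _ => MeasurableSet.univ_pi fun _ => (measurableSet_singleton (x i)).compl]
  simp_rw [hmiss]
  rw [sum_powerset_apply_card (fun k => (-1 : ℝ) ^ k * (1 - k * p) ^ m)]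
  simp only [nsmul_eq_mul, card_univ, Fintype.card_fin]
  exact sum_congr rfl fun i _ => by ring

/-- **Inclusion–exclusion coverage formula.** If a probability measure `μ`
assigns mass `p` to each of `n` distinct points `x 0, …, x (n-1)` (with
`n·p ≤ 1`), then the probability under the `m`-fold product measure `μ^{⊗m}`
that every one of the `n` designated points appears among the `m` coordinates
equals `∑_{i=0}^{n} (−1)^i C(n,i) (1 − i·p)^m`. -/
theorem coverage_inclusion_exclusion
    {X : Type*} [MeasurableSpace X] [MeasurableSingletonClass X]
    (n m : ℕ) (p : ℝ) (hp0 : 0 ≤ p) (hp1 : p ≤ 1) (hnp : (n : ℝ) * p ≤ 1)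
    (μ : Measure X) [IsProbabilityMeasure μ]
    (x : Fin n → X) (hx : Function.Injective x)
    (hμ : ∀ i, μ {x i} = ENNReal.ofReal p) :
    (Measure.pi (fun _ : Fin m => μ)
        {f : Fin m → X | ∀ i : Fin n, ∃ j : Fin m, f j = x i}).toReal
      = ∑ i ∈ Finset.range (n + 1),
          (-1 : ℝ) ^ i * (n.choose i) * (1 - (i : ℝ) * p) ^ m :=
  coverage_inclusion_exclusion_general n m p hp0 μ x hx hμ
end

section
/- Let x ∈ (0,1), let m ≥ 0 be real, let ε > 0, let a be a real with a ≥ ε/2, and let H be a real with H ≥ 1. If x^m ≤ ε/(4a), then x^{m · log₂(2H)} ≤ ε/(aH), where log₂ denotes the base-2 logarithm. -/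
/-- **Scaling argument for the expected-accuracy objective.** If
`x ∈ (0,1)`, `m ≥ 0`, `ε > 0`, `a ≥ ε/2`, `H ≥ 1` and `x^m ≤ ε/(4a)`,
then `x^(m·log₂(2H)) ≤ ε/(aH)`. -/
theorem expected_accuracy_scaling
    (x m ε a H : ℝ) (hx : x ∈ Set.Ioo (0 : ℝ) 1) (hm : 0 ≤ m)
    (hε : 0 < ε) (ha : ε / 2 ≤ a) (hH : 1 ≤ H)
    (h : x ^ m ≤ ε / (4 * a)) :
    x ^ (m * Real.logb 2 (2 * H)) ≤ ε / (a * H) := by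
  obtain ⟨hx0, hx1⟩ := hx
  have ha0 : 0 < a := lt_of_lt_of_le (by linarith) ha
  have hH0 : 0 < H := lt_of_lt_of_le one_pos hH
  set L := Real.logb 2 (2 * H) with hLdef
  have h2H : (0:ℝ) < 2 * H := by linarith
  have hL1 : 1 ≤ L := by
    rw [hLdef, show (1:ℝ) = Real.logb 2 2 by simp]
    gcongr
    · norm_num
    · linarith
  have hy0 : 0 < x ^ m := Real.rpow_pos_of_pos hx0 m
  have hyhalf : x ^ m ≤ 1 / 2 := by
    refine h.trans ?_
    rw [div_le_div_iff₀ (by linarith) (by norm_num)]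
    linarith
  have h2L : (2:ℝ) ^ L = 2 * H := Real.rpow_logb (by norm_num) (by norm_num) h2H
  have hinv : ((1:ℝ)/2) ^ L = (2 * H)⁻¹ := by
    rw [one_div, Real.inv_rpow (by norm_num), h2L]
  have hhalf : ((1:ℝ)/2) ^ (L - 1) = 1 / H := by
    rw [Real.rpow_sub (by norm_num), Real.rpow_one, hinv]
    field_simp
  have key : x ^ (m * L) = x ^ m * (x ^ m) ^ (L - 1) := by
    rw [Real.rpow_mul hx0.le]
    nth_rewrite 1 [show L = 1 + (L - 1) by ring]
    rw [Real.rpow_add hy0, Real.rpow_one]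
  rw [key]
  have hpow : (x ^ m) ^ (L - 1) ≤ ((1:ℝ)/2) ^ (L - 1) :=
    Real.rpow_le_rpow hy0.le hyhalf (by linarith)
  calc x ^ m * (x ^ m) ^ (L - 1) ≤ (ε / (4 * a)) * ((1:ℝ)/2) ^ (L - 1) := by
        exact mul_le_mul h hpow (Real.rpow_nonneg hy0.le _) (by positivity)
    _ = ε / (4 * a) * (1 / H) := by rw [hhalf]
    _ ≤ ε / (a * H) := by
        rw [div_mul_div_comm, div_le_div_iff₀ (by positivity) (by positivity)]
        nlinarith [mul_pos hε (mul_pos ha0 hH0)]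
end

section
/- Let n ≥ 2 be a natural number, let H ≥ 1 be real, let m₁, m₂ ≥ 0 be reals with m₁ + m₂ ≥ 3n · ln H, and let p₁, p, q₁, q be reals with 0 ≤ p₁ ≤ 1/(2n), 1/n ≤ p < 1, 0 ≤ q₁ ≤ 1/(2n), and 1/n ≤ q < 1. Then m₁ · ln(1/(1 − p)) + m₂ · ln(1/(1 − q)) ≥ m₁ · ln(1/(1 − p₁)) + m₂ · ln(1/(1 − q₁)) + ln H. -/
/-!
Both agents' constraints are built from `a ↦ log (1 / (1 - a))`, which lies between `a` and
`a / (1 - a)`. Hence a mass `b ≥ 1/n` contributes at least `1/n`, while a mass `a ≤ 1/(2n)`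
contributes at most `1/(2n - 1) ≤ 2/(3n)` once `n ≥ 2`: every unit of weight gains `1/(3n)`, and
a total weight of `3n · log H` gains `log H`.
-/

open Real

lemma le_log_one_div_one_sub {b : ℝ} (hb : b < 1) : b ≤ log (1 / (1 - b)) := by
  rw [one_div, log_inv]
  linarith [log_le_sub_one_of_pos (sub_pos.mpr hb)]

lemma log_one_div_one_sub_le {a : ℝ} (ha : a < 1) : log (1 / (1 - a)) ≤ a / (1 - a) := by
  have h1a : 0 < 1 - a := sub_pos.mpr ha
  calc log (1 / (1 - a)) ≤ 1 / (1 - a) - 1 := log_le_sub_one_of_pos (by positivity)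
    _ = a / (1 - a) := by field_simp; ring

lemma div_one_sub_le_two_div_three_mul {x a : ℝ} (hx : 2 ≤ x) (ha : a ≤ 1 / (2 * x)) :
    a / (1 - a) ≤ 2 / (3 * x) := by
  have hxa : 2 * x * a ≤ 1 := by rwa [le_div_iff₀' (by positivity)] at ha
  have h1a : 0 < 1 - a := by nlinarith
  rw [div_le_div_iff₀ h1a (by positivity)]
  nlinarith

lemma log_one_div_one_sub_add_le {x a b : ℝ} (hx : 2 ≤ x) (ha : a ≤ 1 / (2 * x))
    (hb : 1 / x ≤ b) (hb1 : b < 1) :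
    log (1 / (1 - a)) + 1 / (3 * x) ≤ log (1 / (1 - b)) := by
  have ha1 : a < 1 := by
    refine ha.trans_lt ?_
    rw [div_lt_one (by positivity)]
    linarith
  have hsplit : 2 / (3 * x) + 1 / (3 * x) = 1 / x := by field_simp; norm_num
  linarith [log_one_div_one_sub_le ha1, div_one_sub_le_two_div_three_mul hx ha,
    le_log_one_div_one_sub hb1]

theorem large_mass_constraints_slack_general
    (n : ℕ) (hn : 2 ≤ n) (H : ℝ)
    (m₁ m₂ : ℝ) (hm₁ : 0 ≤ m₁) (hm₂ : 0 ≤ m₂)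
    (hsum : 3 * n * Real.log H ≤ m₁ + m₂)
    (p₁ p q₁ q : ℝ)
    (hp₁ : p₁ ≤ 1 / (2 * n)) (hp : 1 / (n : ℝ) ≤ p) (hp1 : p < 1)
    (hq₁ : q₁ ≤ 1 / (2 * n)) (hq : 1 / (n : ℝ) ≤ q) (hq1 : q < 1) :
    m₁ * Real.log (1 / (1 - p₁)) + m₂ * Real.log (1 / (1 - q₁)) + Real.log H
      ≤ m₁ * Real.log (1 / (1 - p)) + m₂ * Real.log (1 / (1 - q)) := by
  have hn' : (2 : ℝ) ≤ n := by exact_mod_cast hn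
  have hgap_p := log_one_div_one_sub_add_le hn' hp₁ hp hp1
  have hgap_q := log_one_div_one_sub_add_le hn' hq₁ hq hq1
  have hlogH : log H ≤ (m₁ + m₂) * (1 / (3 * n)) := by
    rw [mul_one_div, le_div_iff₀ (by positivity)]
    linarith
  linarith [mul_le_mul_of_nonneg_left hgap_p hm₁, mul_le_mul_of_nonneg_left hgap_q hm₂]

/-- **Slackness of large-mass LP constraints.** If `m₁ + m₂ ≥ 3n·ln H` and
the masses `p, q` are at least `1/n` while `p₁, q₁` are at most `1/(2n)`,
then the LP constraint induced by `(p, q)` exceeds the one induced by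
`(p₁, q₁)` by an additive margin of `ln H`. -/
theorem large_mass_constraints_slack
    (n : ℕ) (hn : 2 ≤ n) (H : ℝ) (hH : 1 ≤ H)
    (m₁ m₂ : ℝ) (hm₁ : 0 ≤ m₁) (hm₂ : 0 ≤ m₂)
    (hsum : 3 * n * Real.log H ≤ m₁ + m₂)
    (p₁ p q₁ q : ℝ)
    (hp₁0 : 0 ≤ p₁) (hp₁ : p₁ ≤ 1 / (2 * n)) (hp : 1 / (n : ℝ) ≤ p) (hp1 : p < 1)
    (hq₁0 : 0 ≤ q₁) (hq₁ : q₁ ≤ 1 / (2 * n)) (hq : 1 / (n : ℝ) ≤ q) (hq1 : q < 1) :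
    m₁ * Real.log (1 / (1 - p₁)) + m₂ * Real.log (1 / (1 - q₁)) + Real.log H
      ≤ m₁ * Real.log (1 / (1 - p)) + m₂ * Real.log (1 / (1 - q)) :=
  large_mass_constraints_slack_general n hn H m₁ m₂ hm₁ hm₂ hsum p₁ p q₁ q hp₁ hp hp1 hq₁ hq hq1
end
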